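/- Let S be the free monoid on a nine-element alphabet, and for r ∈ {A, B, C} with A, B, C three fixed words of length 12, define γ_r on the set of words containing r as a (contiguous) subword by replacing the first occurrence of r with r·r. Then each γ_r is injective, and γ_r maps the set of words containing at least m disjoint occurrences of r into the set of words containing at least m+1 disjoint occurrences of r. -/
import Mathlib

/-- Replace the first (contiguous) occurrence of the word `r` in `w` by `r ++ r`. -/
def gammaWord (r : List (Fin 9)) : List (Fin 9) → List (Fin 9)
  | [] => []
  | c :: w =>
      if r <+: (c :: w) then r ++ r ++ (c :: w).drop r.length
      else c :: gammaWord r w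

/-- `hasDisjoint r m w` : the word `w` contains at least `m` pairwise disjoint
(non-overlapping) occurrences of `r` as contiguous subwords. -/
def hasDisjoint (r : List (Fin 9)) : ℕ → List (Fin 9) → Prop
  | 0, _ => True
  | m + 1, w => ∃ u v, w = u ++ r ++ v ∧ hasDisjoint r m v

lemma infix_of_cons {r : List (Fin 9)} {c w} (h : r <:+: (c :: w)) (hp : ¬ r <+: (c :: w)) :
    r <:+: w := by
  obtain ⟨s, t, hst⟩ := h
  cases s with
  | nil => exact absurd ⟨t, by simpa using hst⟩ hp
  | cons a s => exact ⟨s, t, by simpa using congrArg List.tail hst⟩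

lemma gamma_decomp (r : List (Fin 9)) (hr : r ≠ []) :
    ∀ w : List (Fin 9), r <:+: w →
      ∃ u v, w = u ++ r ++ v ∧ gammaWord r w = u ++ r ++ r ++ v := by
  intro w
  induction w with
  | nil => intro h; exact absurd (List.infix_nil.mp h) hr
  | cons c w ih =>
    intro h
    by_cases hp : r <+: (c :: w)
    · refine ⟨[], (c :: w).drop r.length, ?_, ?_⟩
      · simpa using (List.prefix_iff_eq_append.mp hp).symm
      · simp [gammaWord, hp]
    · obtain ⟨u, v, h1, h2⟩ := ih (infix_of_cons h hp)
      exact ⟨c :: u, v, by simp [h1], by simp [gammaWord, hp, h2]⟩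

lemma overlap_aux (r a x y : List (Fin 9)) (h : r <+: a ++ (r ++ x)) : r <+: a ++ (r ++ y) := by
  by_cases hlen : r.length ≤ a.length
  · exact (List.prefix_of_prefix_length_le h (a.prefix_append _) hlen).trans (a.prefix_append _)
  · have ha : a <+: r := List.prefix_of_prefix_length_le (a.prefix_append _) h (le_of_not_ge hlen)
    obtain ⟨s, hs⟩ := ha
    obtain ⟨t, ht⟩ := h
    have hst : s ++ t = r ++ x := by
      have h' : a ++ (s ++ t) = a ++ (r ++ x) := by
        rw [← List.append_assoc, hs, ht]
      exact List.append_cancel_left h'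
    have hs_le : s.length ≤ r.length := by
      have := congrArg List.length hs; simp at this; omega
    obtain ⟨s', hs'⟩ := List.prefix_of_prefix_length_le ⟨t, hst⟩ (r.prefix_append x) hs_le
    refine ⟨s' ++ y, ?_⟩
    calc r ++ (s' ++ y) = (a ++ s) ++ (s' ++ y) := by rw [hs]
      _ = a ++ ((s ++ s') ++ y) := by simp [List.append_assoc]
      _ = a ++ (r ++ y) := by rw [hs']

lemma not_prefix_gamma (r : List (Fin 9)) (hr : r ≠ []) (c : Fin 9) (w : List (Fin 9))
    (hp : ¬ r <+: (c :: w)) (hw : r <:+: w) : ¬ r <+: (c :: gammaWord r w) := by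
  obtain ⟨u, v, h1, h2⟩ := gamma_decomp r hr w hw
  intro hcon
  apply hp
  rw [h2] at hcon
  rw [h1]
  have hcon' : r <+: (c :: u) ++ (r ++ (r ++ v)) := by simpa [List.append_assoc] using hcon
  have := overlap_aux r (c :: u) (r ++ v) v hcon'
  simpa [List.append_assoc] using this

def delWord (r : List (Fin 9)) : List (Fin 9) → List (Fin 9)
  | [] => []
  | c :: w => if r <+: (c :: w) then (c :: w).drop r.length else c :: delWord r w

lemma del_pre (r : List (Fin 9)) (hr : r ≠ []) (x : List (Fin 9)) :
    delWord r (r ++ x) = x := by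
  cases r with
  | nil => exact absurd rfl hr
  | cons a r' =>
    have h : (a :: r') <+: a :: (r' ++ x) := ⟨x, by simp⟩
    show delWord (a :: r') (a :: (r' ++ x)) = x
    simp [delWord, h]

lemma del_gamma (r : List (Fin 9)) (hr : r ≠ []) :
    ∀ w, r <:+: w → delWord r (gammaWord r w) = w := by
  intro w
  induction w with
  | nil => intro h; exact absurd (List.infix_nil.mp h) hr
  | cons c w ih =>
    intro h
    by_cases hp : r <+: (c :: w)
    · have hg : gammaWord r (c :: w) = r ++ (r ++ (c :: w).drop r.length) := by
        simp [gammaWord, hp]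
      rw [hg, del_pre r hr]
      exact List.prefix_iff_eq_append.mp hp
    · have hw := infix_of_cons h hp
      have hg : gammaWord r (c :: w) = c :: gammaWord r w := by simp [gammaWord, hp]
      rw [hg, delWord, if_neg (not_prefix_gamma r hr c w hp hw), ih hw]

lemma hasDisjoint_prepend (r a : List (Fin 9)) (n : ℕ) (w : List (Fin 9))
    (h : hasDisjoint r n w) : hasDisjoint r n (a ++ w) := by
  cases n with
  | zero => trivial
  | succ m =>
    obtain ⟨u, v, h1, h2⟩ := h
    exact ⟨a ++ u, v, by simp [h1, List.append_assoc], h2⟩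

lemma main2 (r : List (Fin 9)) (hr : r ≠ []) :
    ∀ (w : List (Fin 9)) (m : ℕ), r <:+: w → hasDisjoint r m w →
      hasDisjoint r (m + 1) (gammaWord r w) := by
  intro w
  induction w with
  | nil => intro m h; exact absurd (List.infix_nil.mp h) hr
  | cons c w ih =>
    intro m h hd
    by_cases hp : r <+: (c :: w)
    · refine ⟨[], r ++ (c :: w).drop r.length, by simp [gammaWord, hp], ?_⟩
      rw [List.prefix_iff_eq_append.mp hp]
      exact hd
    · have hw := infix_of_cons h hp
      have hg : gammaWord r (c :: w) = c :: gammaWord r w := by simp [gammaWord, hp]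
      cases m with
      | zero =>
        obtain ⟨u, v, h1, h2⟩ := gamma_decomp r hr w hw
        exact ⟨c :: u, r ++ v, by simp [hg, h2, List.append_assoc], trivial⟩
      | succ m' =>
        obtain ⟨u, v, h1, h2⟩ := hd
        cases u with
        | nil => exact absurd ⟨v, by simpa using h1.symm⟩ hp
        | cons a u' =>
          have hw' : w = u' ++ r ++ v := by simpa using congrArg List.tail h1
          have hd' : hasDisjoint r (m' + 1) w := ⟨u', v, hw', h2⟩
          have hn := ih (m' + 1) ⟨u', v, by simp [hw']⟩ hd'
          rw [hg]
          exact hasDisjoint_prepend r [c] _ _ hn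

theorem stmt16 (r : List (Fin 9)) (hr : r.length = 12) :
    -- γ_r is injective on the set of words containing r as a subword
    (∀ w₁ w₂ : List (Fin 9), r <:+: w₁ → r <:+: w₂ →
      gammaWord r w₁ = gammaWord r w₂ → w₁ = w₂) ∧
    -- γ_r maps words with at least m disjoint occurrences of r to words
    -- with at least m + 1 disjoint occurrences of r
    (∀ (m : ℕ) (w : List (Fin 9)), r <:+: w → hasDisjoint r m w →
      hasDisjoint r (m + 1) (gammaWord r w)) := by
  have hr' : r ≠ [] := by intro h; simp [h] at hr
  constructor
  · intro w₁ w₂ h₁ h₂ heq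
    rw [← del_gamma r hr' w₁ h₁, ← del_gamma r hr' w₂ h₂, heq]
  · intro m w h hd
    exact main2 r hr' w m h hd
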